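/- arXiv:1207.4336 — 3 statements merged into one kernel-verified Lean document; each statement's English description precedes it below -/
import Mathlib

section
/- Let 0 < x < 1 and δ > 0 with δ not an integer multiple of 2π, and set ε = sign(sin(δ/2)). Then for every real θ, ∫_{−δ/2}^{δ/2} log|1 − ε x e^{it}| dt ≤ ∫_{−δ/2}^{δ/2} log|1 − x e^{i(θ+t)}| dt ≤ ∫_{−δ/2}^{δ/2} log|1 + ε x e^{it}| dt. -/
/-!
Write `g(t) = log ‖1 - x e^{it}‖ = log((1 - x)² + 2x(1 - cos t)) / 2`, which for `0 ≤ x ≠ 1` is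
continuous, even, `2π`-periodic and a decreasing function of `cos t`. The window integral
`W(c) = ∫_{-h}^{h} g(c + t) dt` inherits evenness and periodicity, so its values are all taken
on `[0, π]`. There `W(c) - W(b) = ∫_b^c (g(s + h) - g(s - h)) ds`, and
`cos(s - h) - cos(s + h) = 2 sin s sin h` has the sign of `sin h`, so `W` is monotone on `[0, π]`
in the direction given by the sign of `sin h`. Hence every `W(θ)` lies between `W(0)` and `W(π)`,
and these are the two extremal integrals since `1 + x e^{it} = 1 - x e^{i(π + t)}`.
-/

open Real Complex Set intervalIntegral

noncomputable def windowIntegral {E : Type*} [NormedAddCommGroup E] [NormedSpace ℝ E]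
    (f : ℝ → E) (h c : ℝ) : E :=
  ∫ t in (-h)..h, f (c + t)

namespace windowIntegral

section

variable {E : Type*} [NormedAddCommGroup E] [NormedSpace ℝ E] {f : ℝ → E}

theorem neg_radius (f : ℝ → E) (h c : ℝ) :
    windowIntegral f (-h) c = -windowIntegral f h c := by
  rw [windowIntegral, windowIntegral, neg_neg, integral_symm]

theorem _root_.Function.Periodic.windowIntegral {T : ℝ} (hf : Function.Periodic f T) (h : ℝ) :
    Function.Periodic (windowIntegral f h) T := fun c => by
  simp only [_root_.windowIntegral, add_right_comm c T, hf _]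

theorem _root_.Function.Even.windowIntegral (hf : Function.Even f) (h : ℝ) :
    Function.Even (windowIntegral f h) := fun c => by
  simp only [_root_.windowIntegral]
  rw [← neg_neg h, ← integral_comp_neg]
  simp only [neg_neg, ← hf (c + _), neg_add]

theorem sub_eq_integral (hf : Continuous f) (h b c : ℝ) :
    windowIntegral f h c - windowIntegral f h b = ∫ s in b..c, (f (s + h) - f (s - h)) := by
  have hi : ∀ a a' : ℝ, IntervalIntegrable f MeasureTheory.volume a a' :=
    fun _ _ => hf.intervalIntegrable _ _
  have hplus : IntervalIntegrable (fun s => f (s + h)) MeasureTheory.volume b c :=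
    (hf.comp (continuous_add_const h)).intervalIntegrable _ _
  have hminus : IntervalIntegrable (fun s => f (s - h)) MeasureTheory.volume b c :=
    (hf.comp (by fun_prop : Continuous fun s : ℝ => s - h)).intervalIntegrable _ _
  have hleft := integral_add_adjacent_intervals (hi (b - h) (b + h)) (hi _ (c + h))
  have hright := integral_add_adjacent_intervals (hi (b - h) (c - h)) (hi _ (c + h))
  simp only [windowIntegral, integral_comp_add_left f, ← sub_eq_add_neg]
  rw [integral_sub hplus hminus, integral_comp_add_right f, integral_comp_sub_right f]
  rw [sub_eq_sub_iff_add_eq_add, add_comm, hright, ← hleft, add_comm]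

end

theorem le_of_forall_le {f : ℝ → ℝ} {h b c : ℝ} (hf : Continuous f) (hbc : b ≤ c)
    (H : ∀ s ∈ Icc b c, f (s - h) ≤ f (s + h)) :
    windowIntegral f h b ≤ windowIntegral f h c := by
  have := integral_nonneg (μ := MeasureTheory.volume) hbc fun s hs => sub_nonneg.2 (H s hs)
  linarith [sub_eq_integral hf h b c]

end windowIntegral

theorem exists_mem_Icc_zero_pi_eq_of_even_of_periodic {α : Type*} {φ : ℝ → α}
    (heven : Function.Even φ) (hper : Function.Periodic φ (2 * π)) (θ : ℝ) :
    ∃ c ∈ Icc 0 π, φ θ = φ c := by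
  obtain ⟨hlo, hhi⟩ := toIocMod_mem_Ioc two_pi_pos (-π) θ
  have hθ : φ θ = φ (toIocMod two_pi_pos (-π) θ) := by
    rw [toIocMod, hper.sub_zsmul_eq]
  rcases le_total 0 (toIocMod two_pi_pos (-π) θ) with hpos | hneg
  · exact ⟨_, ⟨hpos, by linarith⟩, hθ⟩
  · exact ⟨_, ⟨neg_nonneg.2 hneg, by linarith⟩, hθ.trans (heven _).symm⟩

noncomputable def logNormOneSubExp (x t : ℝ) : ℝ :=
  Real.log ‖1 - (x : ℂ) * exp (I * t)‖

namespace logNormOneSubExp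

theorem sq_norm (x t : ℝ) :
    ‖1 - (x : ℂ) * exp (I * t)‖ ^ 2 = (1 - x) ^ 2 + 2 * x * (1 - Real.cos t) := by
  rw [Complex.sq_norm, mul_comm I, normSq_apply]
  simp only [sub_re, sub_im, one_re, one_im, re_ofReal_mul, im_ofReal_mul, exp_ofReal_mul_I_re,
    exp_ofReal_mul_I_im]
  linear_combination x ^ 2 * Real.sin_sq_add_cos_sq t

theorem eq_half_log (x t : ℝ) :
    logNormOneSubExp x t = Real.log ((1 - x) ^ 2 + 2 * x * (1 - Real.cos t)) / 2 := by
  rw [logNormOneSubExp, ← sq_norm, Real.log_pow]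
  ring

theorem continuous {x : ℝ} (hx : |x| ≠ 1) : Continuous (logNormOneSubExp x) := by
  refine Continuous.log (by fun_prop) fun t => norm_ne_zero_iff.2 (sub_ne_zero.2 fun h => hx ?_)
  simpa [mul_comm I] using congrArg norm h.symm

theorem even (x : ℝ) : Function.Even (logNormOneSubExp x) := fun t => by
  simp only [eq_half_log, Real.cos_neg]

theorem periodic (x : ℝ) : Function.Periodic (logNormOneSubExp x) (2 * π) := fun t => by
  simp only [eq_half_log, Real.cos_add_two_pi]

theorem le_of_cos_le {x u v : ℝ} (hx0 : 0 ≤ x) (hx1 : x ≠ 1) (h : Real.cos v ≤ Real.cos u) :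
    logNormOneSubExp x u ≤ logNormOneSubExp x v := by
  rw [eq_half_log, eq_half_log]
  have : 0 < (1 - x) ^ 2 := by positivity [sub_ne_zero.2 hx1.symm]
  gcongr
  nlinarith [Real.cos_le_one u]

end logNormOneSubExp

section

open logNormOneSubExp

variable {x h : ℝ}

theorem monotoneOn_windowIntegral_logNormOneSubExp (hx0 : 0 ≤ x) (hx1 : x ≠ 1)
    (hh : 0 ≤ Real.sin h) : MonotoneOn (windowIntegral (logNormOneSubExp x) h) (Icc 0 π) := by
  intro b hb c hc hbc
  refine windowIntegral.le_of_forall_le (continuous (by rwa [abs_of_nonneg hx0])) hbc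
    fun s hs => le_of_cos_le hx0 hx1 ?_
  have : 0 ≤ Real.sin s := sin_nonneg_of_nonneg_of_le_pi (hb.1.trans hs.1) (hs.2.trans hc.2)
  rw [Real.cos_add, Real.cos_sub]
  nlinarith

theorem windowIntegral_logNormOneSubExp_mem_Icc_of_sin_nonneg (hx0 : 0 ≤ x) (hx1 : x ≠ 1)
    (hh : 0 ≤ Real.sin h) (θ : ℝ) :
    windowIntegral (logNormOneSubExp x) h θ ∈
      Icc (windowIntegral (logNormOneSubExp x) h 0) (windowIntegral (logNormOneSubExp x) h π) := by
  obtain ⟨c, hc, hθc⟩ := exists_mem_Icc_zero_pi_eq_of_even_of_periodic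
    ((even x).windowIntegral h) ((periodic x).windowIntegral h) θ
  have hmono := monotoneOn_windowIntegral_logNormOneSubExp hx0 hx1 hh
  rw [hθc]
  exact ⟨hmono ⟨le_rfl, pi_pos.le⟩ hc hc.1, hmono hc ⟨pi_pos.le, le_rfl⟩ hc.2⟩

theorem windowIntegral_logNormOneSubExp_mem_Icc_of_sin_nonpos (hx0 : 0 ≤ x) (hx1 : x ≠ 1)
    (hh : Real.sin h ≤ 0) (θ : ℝ) :
    windowIntegral (logNormOneSubExp x) h θ ∈
      Icc (windowIntegral (logNormOneSubExp x) h π) (windowIntegral (logNormOneSubExp x) h 0) := by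
  have := windowIntegral_logNormOneSubExp_mem_Icc_of_sin_nonneg hx0 hx1 (h := -h)
    (by rwa [Real.sin_neg, neg_nonneg]) θ
  simpa only [windowIntegral.neg_radius, mem_Icc, neg_le_neg_iff, and_comm] using this

end

theorem integral_log_norm_one_sub_mul_exp (x h θ : ℝ) :
    ∫ t in (-h)..h, Real.log ‖1 - (x : ℂ) * exp (I * (θ + t))‖ =
      windowIntegral (logNormOneSubExp x) h θ := by
  simp only [windowIntegral, logNormOneSubExp, ofReal_add]

theorem integral_log_norm_one_add_mul_exp (x h : ℝ) :
    ∫ t in (-h)..h, Real.log ‖1 + (x : ℂ) * exp (I * t)‖ =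
      windowIntegral (logNormOneSubExp x) h π := by
  simp only [windowIntegral, logNormOneSubExp, ofReal_add, mul_add, Complex.exp_add,
    mul_comm I (π : ℂ), exp_pi_mul_I]
  ring_nf

theorem stmt_3_general (x δ : ℝ) (hx0 : 0 < x) (hx1 : x < 1)
    (hδ' : ∀ n : ℤ, δ ≠ 2 * π * n)
    (ε : ℝ) (hε : ε = Real.sign (Real.sin (δ/2))) (θ : ℝ) :
    (∫ t in (-δ/2)..(δ/2),
        Real.log (‖1 - (ε : ℂ) * x * Complex.exp (Complex.I * t)‖))
      ≤ (∫ t in (-δ/2)..(δ/2),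
        Real.log (‖1 - (x : ℂ) * Complex.exp (Complex.I * (θ + t))‖)) ∧
    (∫ t in (-δ/2)..(δ/2),
        Real.log (‖1 - (x : ℂ) * Complex.exp (Complex.I * (θ + t))‖))
      ≤ (∫ t in (-δ/2)..(δ/2),
        Real.log (‖1 + (ε : ℂ) * x * Complex.exp (Complex.I * t)‖)) := by
  have hsin : Real.sin (δ / 2) ≠ 0 := fun h0 => by
    obtain ⟨n, hn⟩ := Real.sin_eq_zero_iff.1 h0
    exact hδ' n (by linarith)
  have hW0 := integral_log_norm_one_sub_mul_exp x (δ / 2) 0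
  simp only [ofReal_zero, zero_add] at hW0
  rw [neg_div, integral_log_norm_one_sub_mul_exp]
  rcases hsin.lt_or_gt with hneg | hpos
  · rw [Real.sign_of_neg hneg] at hε
    subst hε
    simp only [ofReal_neg, ofReal_one, neg_mul, one_mul, sub_neg_eq_add, ← sub_eq_add_neg]
    rw [integral_log_norm_one_add_mul_exp, hW0]
    exact windowIntegral_logNormOneSubExp_mem_Icc_of_sin_nonpos hx0.le hx1.ne hneg.le θ
  · rw [Real.sign_of_pos hpos] at hε
    subst hε
    simp only [ofReal_one, one_mul]
    rw [integral_log_norm_one_add_mul_exp, hW0]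
    exact windowIntegral_logNormOneSubExp_mem_Icc_of_sin_nonneg hx0.le hx1.ne hpos.le θ

/-- Lemma 1 of the paper: extremal bounds for ∫ log|1 − x e^{i(θ+t)}| dt. -/
theorem stmt_3 (x δ : ℝ) (hx0 : 0 < x) (hx1 : x < 1) (hδ : 0 < δ)
    (hδ' : ∀ n : ℤ, δ ≠ 2 * π * n)
    (ε : ℝ) (hε : ε = Real.sign (Real.sin (δ/2))) (θ : ℝ) :
    (∫ t in (-δ/2)..(δ/2),
        Real.log (‖1 - (ε : ℂ) * x * Complex.exp (Complex.I * t)‖))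
      ≤ (∫ t in (-δ/2)..(δ/2),
        Real.log (‖1 - (x : ℂ) * Complex.exp (Complex.I * (θ + t))‖)) ∧
    (∫ t in (-δ/2)..(δ/2),
        Real.log (‖1 - (x : ℂ) * Complex.exp (Complex.I * (θ + t))‖))
      ≤ (∫ t in (-δ/2)..(δ/2),
        Real.log (‖1 + (ε : ℂ) * x * Complex.exp (Complex.I * t)‖)) :=
  stmt_3_general x δ hx0 hx1 hδ' ε hε θ
end

section
/- For 0 < x < 1 and δ > 0, the second derivative of F(θ) = Re ∫_{−δ/2}^{δ/2} log(1 − x e^{i(θ+t)}) dt satisfies F''(0) = 2 x sin(δ/2)/|1 − x e^{iδ/2}|² and F''(π) = −2 x sin(δ/2)/|1 + x e^{iδ/2}|². -/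
/-!
With `q(s) = |1 - x e^{is}|² = 1 - 2x cos s + x²`, which is positive for `|x| < 1`, the integrand
is `g(s) = ½ log q(s)` evaluated at `s = θ + t`. Hence `F(θ)` is the integral of `g` over
`[θ - δ/2, θ + δ/2]`, so `F'(θ) = g(θ + δ/2) - g(θ - δ/2)` and
`F''(θ) = h(θ + δ/2) - h(θ - δ/2)` with `h(s) = g'(s) = x sin s / q(s)`. Since `h` is odd and
`h(π + s) = -x sin s / |1 + x e^{is}|²`, the two values follow.
-/

open Real Complex

theorem hasDerivAt_intervalIntegral_comp_add {E : Type*} [NormedAddCommGroup E]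
    [NormedSpace ℝ E] [CompleteSpace E] {g : ℝ → E} (hg : Continuous g) (a b θ : ℝ) :
    HasDerivAt (fun θ => ∫ t in a..b, g (θ + t)) (g (θ + b) - g (θ + a)) θ := by
  have hprim (c : ℝ) : HasDerivAt (fun θ => ∫ s in (0 : ℝ)..θ + c, g s) (g (θ + c)) θ :=
    ((hg.integral_hasStrictDerivAt 0 (θ + c)).hasDerivAt).comp_add_const θ c
  have hshift : (fun θ => ∫ t in a..b, g (θ + t))
      = fun θ => (∫ s in (0 : ℝ)..θ + b, g s) - ∫ s in (0 : ℝ)..θ + a, g s := by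
    funext θ
    rw [intervalIntegral.integral_comp_add_left, intervalIntegral.integral_interval_sub_left
      (hg.intervalIntegrable _ _) (hg.intervalIntegrable _ _)]
  rw [hshift]
  exact (hprim b).sub (hprim a)

theorem norm_one_sub_ofReal_mul_exp_sq (x s : ℝ) :
    ‖1 - (x : ℂ) * exp (I * s)‖ ^ 2 = 1 - 2 * x * Real.cos s + x ^ 2 := by
  rw [Complex.sq_norm, Complex.normSq_apply]
  simp [exp_re, exp_im]
  nlinarith [Real.sin_sq_add_cos_sq s]

theorem one_sub_two_mul_cos_add_sq_pos {x : ℝ} (hx : |x| < 1) (s : ℝ) :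
    0 < 1 - 2 * x * Real.cos s + x ^ 2 := by
  have hcos : x * Real.cos s ≤ |x| :=
    calc x * Real.cos s ≤ |x| * |Real.cos s| := abs_mul x (Real.cos s) ▸ le_abs_self _
      _ ≤ |x| := mul_le_of_le_one_right (abs_nonneg x) (Real.abs_cos_le_one s)
  nlinarith [sq_abs x, abs_nonneg x]

theorem re_log_one_sub_ofReal_mul_exp (x s : ℝ) :
    (log (1 - (x : ℂ) * exp (I * s))).re = Real.log (1 - 2 * x * Real.cos s + x ^ 2) / 2 := by
  rw [log_re, ← norm_one_sub_ofReal_mul_exp_sq, Real.log_pow]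
  push_cast
  ring

theorem hasDerivAt_re_log_one_sub_ofReal_mul_exp {x : ℝ} (hx : |x| < 1) (s : ℝ) :
    HasDerivAt (fun s : ℝ => (log (1 - (x : ℂ) * exp (I * s))).re)
      (x * Real.sin s / (1 - 2 * x * Real.cos s + x ^ 2)) s := by
  have hq : HasDerivAt (fun s => 1 - 2 * x * Real.cos s + x ^ 2) (2 * x * Real.sin s) s :=
    ((((Real.hasDerivAt_cos s).const_mul (2 * x)).const_sub 1).add_const (x ^ 2)).congr_deriv
      (by ring)
  have hlog := (hq.log (one_sub_two_mul_cos_add_sq_pos hx s).ne').div_const 2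
  simp only [← re_log_one_sub_ofReal_mul_exp] at hlog
  exact hlog.congr_deriv (by field_simp)

theorem deriv_deriv_intervalIntegral_re_log_one_sub_ofReal_mul_exp {x : ℝ} (hx : |x| < 1)
    (a b θ : ℝ) :
    deriv (deriv (fun θ : ℝ => ∫ t in a..b, (log (1 - (x : ℂ) * exp (I * (θ + t)))).re)) θ
      = x * Real.sin (θ + b) / (1 - 2 * x * Real.cos (θ + b) + x ^ 2)
        - x * Real.sin (θ + a) / (1 - 2 * x * Real.cos (θ + a) + x ^ 2) := by
  set g := fun s : ℝ => (log (1 - (x : ℂ) * exp (I * s))).re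
  have hg' := hasDerivAt_re_log_one_sub_ofReal_mul_exp hx
  have hg : Continuous g := continuous_iff_continuousAt.2 fun s => (hg' s).continuousAt
  have hF : deriv (fun θ : ℝ => ∫ t in a..b, (log (1 - (x : ℂ) * exp (I * (θ + t)))).re)
      = fun θ => g (θ + b) - g (θ + a) := by
    funext θ
    simpa [g] using (hasDerivAt_intervalIntegral_comp_add hg a b θ).deriv
  rw [hF]
  exact (((hg' _).comp_add_const θ b).sub ((hg' _).comp_add_const θ a)).deriv

theorem stmt_6_general (x δ : ℝ) (hx0 : 0 < x) (hx1 : x < 1) :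
    deriv (deriv (fun θ : ℝ => ∫ t in (-δ/2)..(δ/2),
        (Complex.log (1 - (x : ℂ) * Complex.exp (Complex.I * (θ + t)))).re)) 0
      = 2 * x * Real.sin (δ/2) /
        ‖1 - (x : ℂ) * Complex.exp (Complex.I * (δ/2))‖^2 ∧
    deriv (deriv (fun θ : ℝ => ∫ t in (-δ/2)..(δ/2),
        (Complex.log (1 - (x : ℂ) * Complex.exp (Complex.I * (θ + t)))).re)) π
      = -(2 * x * Real.sin (δ/2) /
        ‖1 + (x : ℂ) * Complex.exp (Complex.I * (δ/2))‖^2) := by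
  have hx : |x| < 1 := abs_lt.2 ⟨by linarith, hx1⟩
  have hcast : (δ : ℂ) / 2 = ((δ / 2 : ℝ) : ℂ) := by push_cast; ring
  have hplus : 1 + (x : ℂ) * exp (I * (δ / 2))
      = 1 - ((-x : ℝ) : ℂ) * exp (I * (δ / 2)) := by push_cast; ring
  rw [deriv_deriv_intervalIntegral_re_log_one_sub_ofReal_mul_exp hx,
    deriv_deriv_intervalIntegral_re_log_one_sub_ofReal_mul_exp hx, hplus, hcast,
    norm_one_sub_ofReal_mul_exp_sq, norm_one_sub_ofReal_mul_exp_sq]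
  constructor
  · rw [zero_add, zero_add, neg_div, Real.sin_neg, Real.cos_neg]
    ring
  · rw [neg_div, ← sub_eq_add_neg, Real.sin_pi_sub, Real.cos_pi_sub, add_comm π,
      Real.sin_add_pi, Real.cos_add_pi]
    ring

/-- Second-derivative values of F(θ) = Re ∫_{−δ/2}^{δ/2} log(1 − x e^{i(θ+t)}) dt
at θ = 0 and θ = π. -/
theorem stmt_6 (x δ : ℝ) (hx0 : 0 < x) (hx1 : x < 1) (hδ : 0 < δ) :
    deriv (deriv (fun θ : ℝ => ∫ t in (-δ/2)..(δ/2),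
        (Complex.log (1 - (x : ℂ) * Complex.exp (Complex.I * (θ + t)))).re)) 0
      = 2 * x * Real.sin (δ/2) /
        ‖1 - (x : ℂ) * Complex.exp (Complex.I * (δ/2))‖^2 ∧
    deriv (deriv (fun θ : ℝ => ∫ t in (-δ/2)..(δ/2),
        (Complex.log (1 - (x : ℂ) * Complex.exp (Complex.I * (θ + t)))).re)) π
      = -(2 * x * Real.sin (δ/2) /
        ‖1 + (x : ℂ) * Complex.exp (Complex.I * (δ/2))‖^2) :=
  stmt_6_general x δ hx0 hx1
end

section
/- The series ∑_{n=1}^∞ (2 log(1 + 1/(2n−1)) − 1/n) converges and equals −γ + log π, where γ is the Euler–Mascheroni constant. -/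
/-!
Since `((2k+2)/(2k+1))² = W(k+1)/W(k) · (2k+3)/(2k+1)` for the Wallis products `W`, the
`n`-th partial sum telescopes to `log W(n) + log(2n+1) - H(n)`. Writing this as
`log W(n) + log((2n+1)/(n+1)) - (H(n) - log(n+1))`, the three pieces tend to `log (π/2)`,
`log 2` and `γ`. The terms are nonnegative because `log x ≥ 1 - 1/x`, so convergence of the
partial sums gives the `HasSum`.
-/

open Real Filter Finset Topology

namespace Real.Wallis

theorem two_mul_log_div_eq_log_W_succ_sub (k : ℕ) :
    2 * log ((2 * k + 2) / (2 * k + 1)) =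
      (log (W (k + 1)) + log (2 * (k + 1 : ℕ) + 1)) - (log (W k) + log (2 * k + 1)) := by
  have h₁ : (0 : ℝ) < 2 * k + 1 := by positivity
  have h₂ : (0 : ℝ) < 2 * k + 2 := by positivity
  have h₃ : (0 : ℝ) < 2 * k + 3 := by positivity
  rw [W_succ, log_mul (W_pos k).ne' (by positivity), log_mul (by positivity) (by positivity),
    log_div h₂.ne' h₁.ne', log_div h₂.ne' h₃.ne']
  push_cast
  ring_nf

theorem sum_range_two_mul_log_div_sub_inv (n : ℕ) :
    ∑ i ∈ range n, (2 * log ((2 * i + 2) / (2 * i + 1)) - 1 / (i + 1 : ℝ)) =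
      log (W n) + log (2 * n + 1) - harmonic n := by
  rw [sum_sub_distrib, sum_congr rfl fun i _ => two_mul_log_div_eq_log_W_succ_sub i,
    sum_range_sub (fun k => log (W k) + log (2 * k + 1)), harmonic]
  simp [W, one_div]

theorem tendsto_log_W_add_log_sub_harmonic :
    Tendsto (fun n : ℕ => log (W n) + log (2 * n + 1) - harmonic n) atTop
      (𝓝 (-eulerMascheroniConstant + log π)) := by
  have hW : Tendsto (fun n => log (W n)) atTop (𝓝 (log (π / 2))) :=
    (continuousAt_log (by positivity)).tendsto.comp tendsto_W_nhds_pi_div_two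
  have hratio : Tendsto (fun n : ℕ => log ((1 + 2 * n) / (1 + 1 * n))) atTop
      (𝓝 (log (2 / 1))) :=
    (continuousAt_log (by norm_num)).tendsto.comp
      (tendsto_add_mul_div_add_mul_atTop_nhds 1 1 2 one_ne_zero)
  have hlim := (hW.add hratio).sub tendsto_harmonic_sub_log_add_one
  rw [div_one, log_div pi_ne_zero two_ne_zero, sub_add_cancel, sub_eq_neg_add] at hlim
  refine hlim.congr fun n => ?_
  rw [show (1 + 2 * n : ℝ) / (1 + 1 * n) = (2 * n + 1) / (n + 1) by ring,
    log_div (by positivity) (by positivity)]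
  ring

end Real.Wallis

theorem two_mul_log_div_sub_inv_nonneg (k : ℕ) :
    0 ≤ 2 * log ((2 * k + 2) / (2 * k + 1)) - 1 / (k + 1 : ℝ) := by
  have hlog := one_sub_inv_le_log_of_pos (x := (2 * k + 2) / (2 * k + 1)) (by positivity)
  rw [inv_div, one_sub_div (by positivity)] at hlog
  have hinv : 1 / (k + 1 : ℝ) = 2 * ((2 * k + 2 - (2 * k + 1)) / (2 * k + 2)) := by
    field_simp
    ring
  linarith

/-- ∑_{n=1}^∞ (2 log(1 + 1/(2n−1)) − 1/n) = −γ + log π. -/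
theorem stmt_11 :
    HasSum (fun n : ℕ => 2 * Real.log (1 + 1 / (2 * (n + 1 : ℝ) - 1)) - 1 / (n + 1 : ℝ))
      (-Real.eulerMascheroniConstant + Real.log π) := by
  have hterm (k : ℕ) : 1 + 1 / (2 * (k + 1 : ℝ) - 1) = (2 * k + 2) / (2 * k + 1) := by
    rw [show 2 * (k + 1 : ℝ) - 1 = 2 * k + 1 by ring]
    field_simp
    ring
  simp only [hterm]
  rw [hasSum_iff_tendsto_nat_of_nonneg two_mul_log_div_sub_inv_nonneg]
  simpa only [Real.Wallis.sum_range_two_mul_log_div_sub_inv] using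
    Real.Wallis.tendsto_log_W_add_log_sub_harmonic
end
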